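/- arXiv:2004.14526 — 3 statements merged into one kernel-verified Lean document; each statement's English description precedes it below -/
import Mathlib

section
/- If X and Y are vertices of F_k(G) at distance 2 in F_k(G) with |X ∩ Y| = k−1, then there exist vertices x, y of G with X\Y = {x}, Y\X = {y}, and d_G(x,y) = 2. -/
/-- The `k`-token graph of `G`: vertices are the `k`-subsets of `V(G)`,
two subsets being adjacent iff their symmetric difference is an edge of `G`. -/
def tokenGraph {V : Type*} [DecidableEq V] (G : SimpleGraph V) (k : ℕ) :
    SimpleGraph {s : Finset V // s.card = k} where
  Adj X Y := ∃ a b, G.Adj a b ∧ symmDiff X.1 Y.1 = {a, b}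
  symm := by
    constructor
    rintro X Y ⟨a, b, hab, h⟩
    exact ⟨a, b, hab, by rwa [symmDiff_comm]⟩
  loopless := by
    constructor
    rintro X ⟨a, b, hab, h⟩
    rw [symmDiff_self] at h
    have : a ∈ (⊥ : Finset V) := h ▸ Finset.mem_insert_self a {b}
    simp at this


/-! `d(X, Y) = 2` gives a common neighbour `Z` of `X` and `Y` in `F_k(G)`, so
`X ∆ Y = (X ∆ Z) ∆ (Z ∆ Y)` is the symmetric difference of two edges `ab` and `cd` of `G`.
Since `|X ∩ Y| = k - 1`, `X ∆ Y = {x, y}` has two elements, which forces the two edges to share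
exactly one endpoint `w`; then `x - w - y` is a path, while `x` and `y` are not adjacent because
`X` and `Y` are not. -/

theorem SimpleGraph.dist_eq_two_iff {V : Type*} {G : SimpleGraph V} {u v : V} :
    G.dist u v = 2 ↔ u ≠ v ∧ ¬G.Adj u v ∧ (G.commonNeighbors u v).Nonempty := by
  rw [SimpleGraph.dist, ENat.toNat_eq_iff two_ne_zero, Nat.cast_ofNat, edist_eq_two_iff]

theorem SimpleGraph.commonNeighbors_nonempty_of_symmDiff_pair {V : Type*} [DecidableEq V]
    {G : SimpleGraph V} {a b c d x y : V} (hab : G.Adj a b) (hcd : G.Adj c d)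
    (h : symmDiff ({a, b} : Finset V) {c, d} = {x, y}) (hxy : x ≠ y) :
    (G.commonNeighbors x y).Nonempty := by
  have hmem (v : V) : v = x ∨ v = y ↔
      (v = a ∨ v = b) ∧ ¬(v = c ∨ v = d) ∨ (v = c ∨ v = d) ∧ ¬(v = a ∨ v = b) := by
    simpa [Finset.mem_symmDiff] using (Finset.ext_iff.mp h v).symm
  -- `x ≠ y` forces the edges `ab` and `cd` to share exactly one endpoint: the common neighbour.
  simp only [Set.Nonempty, mem_commonNeighbors]
  grind [adj_comm, hab.ne, hcd.ne, hmem x, hmem y, hmem a, hmem b, hmem c, hmem d]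

theorem Finset.card_sdiff_eq_one_of_card_inter_add_one {α : Type*} [DecidableEq α]
    {s t : Finset α} (h : (s ∩ t).card + 1 = s.card) : (s \ t).card = 1 := by
  have := card_sdiff_add_card_inter s t
  omega

theorem Finset.symmDiff_eq_pair {α : Type*} [DecidableEq α] {s t : Finset α} {x y : α}
    (hx : s \ t = {x}) (hy : t \ s = {y}) : symmDiff s t = {x, y} := by
  rw [symmDiff_def, sup_eq_union, hx, hy, insert_eq]

theorem stmt5 {V : Type*} [DecidableEq V] (G : SimpleGraph V) (k : ℕ)
    (X Y : {s : Finset V // s.card = k})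
    (h : (tokenGraph G k).dist X Y = 2)
    (hZ : (X.1 ∩ Y.1).card = k - 1) :
    ∃ x y : V, X.1 \ Y.1 = {x} ∧ Y.1 \ X.1 = {y} ∧ G.dist x y = 2 := by
  obtain ⟨hXY, hnadj, Z, hZmem⟩ := SimpleGraph.dist_eq_two_iff.mp h
  obtain ⟨⟨a, b, hab, hXZ⟩, ⟨c, d, hcd, hYZ⟩⟩ := (tokenGraph G k).mem_commonNeighbors.mp hZmem
  have hk : 0 < k := Nat.pos_of_ne_zero fun hk ↦ hXY <| Subtype.ext <| by
    rw [Finset.card_eq_zero.mp (X.2.trans hk), Finset.card_eq_zero.mp (Y.2.trans hk)]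
  have hXY_card : (X.1 ∩ Y.1).card + 1 = k := by omega
  obtain ⟨x, hx⟩ := Finset.card_eq_one.mp <|
    Finset.card_sdiff_eq_one_of_card_inter_add_one (hXY_card.trans X.2.symm)
  obtain ⟨y, hy⟩ := Finset.card_eq_one.mp <| Finset.card_sdiff_eq_one_of_card_inter_add_one <|
    (Finset.inter_comm Y.1 X.1 ▸ hXY_card).trans Y.2.symm
  have hXY_pair : symmDiff X.1 Y.1 = {x, y} := Finset.symmDiff_eq_pair hx hy
  have hxy : x ≠ y := Finset.disjoint_singleton.mp (hx ▸ hy ▸ disjoint_sdiff_sdiff)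
  have hedges : symmDiff ({a, b} : Finset V) {c, d} = {x, y} := by
    rw [← hXZ, ← hYZ, symmDiff_symmDiff_symmDiff_comm, symmDiff_self, symmDiff_bot, hXY_pair]
  refine ⟨x, y, hx, hy, SimpleGraph.dist_eq_two_iff.mpr ⟨hxy, ?_, ?_⟩⟩
  · exact fun hadj ↦ hnadj ⟨x, y, hadj, hXY_pair⟩
  · exact SimpleGraph.commonNeighbors_nonempty_of_symmDiff_pair hab hcd hedges hxy
end

section
/- Let T be a tree, let X, Y be k-subsets of V(T) with |X ∩ Y| = k−1, X\Y = {x}, Y\X = {y}, and suppose xvy is a path in T with v ∉ X ∪ Y. Let Z = X ∩ Y, W = V(T)\(X∪Y), let η be the number of edges of T between Z and W, let a = |{w ∈ W\{v} : wx ∈ E(T)}|, b = |{z ∈ Z : zy ∈ E(T)}|, c = |{z ∈ Z : zx ∈ E(T)}|, d = |{w ∈ W\{v} : wy ∈ E(T)}|. Then deg_{F_k(T)}(X) = a + b + η + 1 and deg_{F_k(T)}(Y) = c + d + η + 1. -/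
open Finset
open scoped symmDiff

namespace Finset

variable {α : Type*} [DecidableEq α] {s t : Finset α} {a b : α}

lemma pair_eq_pair_iff {c d : α} :
    ({a, b} : Finset α) = {c, d} ↔ a = c ∧ b = d ∨ a = d ∧ b = c := by
  rw [← coe_inj, coe_pair, coe_pair, Set.pair_eq_pair_iff]

lemma symmDiff_pair_eq_insert_erase (ha : a ∈ s) (hb : b ∉ s) :
    s ∆ {a, b} = insert b (s.erase a) := by
  ext x
  by_cases hxa : x = a <;> by_cases hxb : x = b <;> subst_vars <;> simp_all [mem_symmDiff]

lemma card_symmDiff_pair (ha : a ∈ s) (hb : b ∉ s) : #(s ∆ {a, b}) = #s := by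
  rw [symmDiff_pair_eq_insert_erase ha hb,
    card_insert_of_notMem fun h => hb (mem_of_mem_erase h), card_erase_add_one ha]

lemma exists_symmDiff_eq_pair_of_card_eq (h : #s = #t) (hst : #(s ∆ t) = 2) :
    ∃ a ∈ s, ∃ b ∉ s, s ∆ t = {a, b} := by
  have hsum : #(s \ t) + #(t \ s) = 2 := by
    rw [← card_union_of_disjoint disjoint_sdiff_sdiff, ← Finset.symmDiff_def, hst]
  have hsdiff := card_sdiff_comm h
  obtain ⟨a, ha⟩ := card_eq_one.1 (show #(s \ t) = 1 by omega)
  obtain ⟨b, hb⟩ := card_eq_one.1 (show #(t \ s) = 1 by omega)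
  have ha' := mem_sdiff.1 (ha ▸ mem_singleton_self a)
  have hb' := mem_sdiff.1 (hb ▸ mem_singleton_self b)
  exact ⟨a, ha'.1, b, hb'.2, by rw [Finset.symmDiff_def, ha, hb]; rfl⟩

lemma insert_inter_of_sdiff_eq_singleton (h : s \ t = {a}) : insert a (s ∩ t) = s := by
  rw [insert_eq, ← h, sdiff_union_inter]

lemma insert_compl_union_of_sdiff_eq_singleton [Fintype α] (h : t \ s = {a}) :
    insert a (s ∪ t)ᶜ = sᶜ := by
  rw [insert_eq, ← h]
  ext x
  simp only [mem_union, mem_sdiff, mem_compl]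
  tauto

end Finset

namespace SimpleGraph

variable {V : Type*} (G : SimpleGraph V)

lemma card_interedges_eq_sum [DecidableRel G.Adj] (s t : Finset V) :
    #(G.interedges s t) = ∑ u ∈ s, #{w ∈ t | G.Adj u w} := by
  simp only [interedges_def, card_filter, sum_product]

variable [DecidableEq V]

lemma CliqueFree.not_adj_of_adj_of_adj (hG : G.CliqueFree 3) {x v y : V}
    (hxv : G.Adj x v) (hvy : G.Adj v y) : ¬G.Adj x y := fun hxy =>
  hG {x, v, y} (is3Clique_triple_iff.2 ⟨hxv, hxy, hvy⟩)

lemma tokenGraph_adj_iff {k : ℕ} {X Y : {s : Finset V // #s = k}} :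
    (tokenGraph G k).Adj X Y ↔ ∃ u ∈ X.1, ∃ w ∉ X.1, G.Adj u w ∧ Y.1 = X.1 ∆ {u, w} := by
  constructor
  · rintro ⟨a, b, hab, h⟩
    obtain ⟨u, hu, w, hw, huw⟩ :=
      exists_symmDiff_eq_pair_of_card_eq (X.2.trans Y.2.symm) (by rw [h, card_pair hab.ne])
    refine ⟨u, hu, w, hw, ?_, by rw [← huw, symmDiff_symmDiff_cancel_left]⟩
    rcases pair_eq_pair_iff.1 (huw.symm.trans h) with ⟨rfl, rfl⟩ | ⟨rfl, rfl⟩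
    exacts [hab, hab.symm]
  · rintro ⟨u, -, w, -, huw, hY⟩
    exact ⟨u, w, huw, by rw [hY, symmDiff_symmDiff_cancel_left]⟩

variable [DecidableRel G.Adj]

lemma card_neighborSet_tokenGraph [Fintype V] {k : ℕ} (X : {s : Finset V // #s = k}) :
    Nat.card ((tokenGraph G k).neighborSet X) = #(G.interedges X.1 X.1ᶜ) := by
  have hmem {p : V × V} (hp : p ∈ G.interedges X.1 X.1ᶜ) :
      p.1 ∈ X.1 ∧ p.2 ∉ X.1 ∧ G.Adj p.1 p.2 := by
    simpa only [mem_compl] using (mem_interedges_iff G).1 hp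
  let f : G.interedges X.1 X.1ᶜ → (tokenGraph G k).neighborSet X := fun p =>
    ⟨⟨X.1 ∆ {p.1.1, p.1.2}, (card_symmDiff_pair (hmem p.2).1 (hmem p.2).2.1).trans X.2⟩,
      G.tokenGraph_adj_iff.2 ⟨_, (hmem p.2).1, _, (hmem p.2).2.1, (hmem p.2).2.2, rfl⟩⟩
  have hf : Function.Bijective f := by
    refine ⟨fun p q hpq => ?_, fun ⟨Y, hY⟩ => ?_⟩
    · have hpair := symmDiff_right_injective X.1 (congrArg (·.1.1) hpq)
      obtain ⟨hp₁, hp₂, -⟩ := hmem p.2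
      obtain ⟨hq₁, hq₂, -⟩ := hmem q.2
      rcases pair_eq_pair_iff.1 hpair with ⟨h₁, h₂⟩ | ⟨h₁, -⟩
      · exact Subtype.ext (Prod.ext h₁ h₂)
      · exact absurd (h₁ ▸ hp₁) hq₂
    · obtain ⟨u, hu, w, hw, huw, hYX⟩ := G.tokenGraph_adj_iff.1 hY
      exact ⟨⟨(u, w), (mk_mem_interedges_iff G).2 ⟨hu, mem_compl.2 hw, huw⟩⟩,
        Subtype.ext (Subtype.ext hYX.symm)⟩
  rw [← Nat.card_eq_of_bijective f hf, Nat.card_eq_finsetCard]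

lemma card_interedges_insert_left {s : Finset V} {a : V} (ha : a ∉ s) (t : Finset V) :
    #(G.interedges (insert a s) t) = #{w ∈ t | G.Adj a w} + #(G.interedges s t) := by
  rw [card_interedges_eq_sum, sum_insert ha, card_interedges_eq_sum]

lemma card_interedges_insert_right (s : Finset V) {t : Finset V} {b : V} (hb : b ∉ t) :
    #(G.interedges s (insert b t)) = #(G.interedges s t) + #{u ∈ s | G.Adj u b} := by
  rw [card_interedges_eq_sum, card_interedges_eq_sum, card_filter, ← sum_add_distrib]
  refine sum_congr rfl fun u _ => ?_
  rw [filter_insert]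
  split_ifs
  · exact card_insert_of_notMem fun h => hb (mem_filter.1 h).1
  · rfl

lemma card_interedges_of_disjoint [Fintype G.edgeSet] {s t : Finset V} (hst : Disjoint s t) :
    #(G.interedges s t) = #{e ∈ G.edgeFinset | ∃ u ∈ s, ∃ w ∈ t, e = s(u, w)} := by
  refine card_nbij (fun p => s(p.1, p.2)) (fun p hp => ?_) (fun p hp q hq hpq => ?_) ?_
  · obtain ⟨hp₁, hp₂, hadj⟩ := (mem_interedges_iff G).1 hp
    exact mem_filter.2 ⟨mem_edgeFinset.2 hadj, p.1, hp₁, p.2, hp₂, rfl⟩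
  · obtain ⟨hp₁, -, -⟩ := (mem_interedges_iff G).1 hp
    obtain ⟨-, hq₂, -⟩ := (mem_interedges_iff G).1 hq
    rcases Sym2.mk_eq_mk_iff.1 hpq with h | h
    · exact h
    · exact absurd (h ▸ hq₂ : p.1 ∈ t) (Finset.disjoint_left.1 hst hp₁)
  · intro e he
    obtain ⟨he, u, hu, w, hw, rfl⟩ := mem_filter.1 he
    exact ⟨(u, w), (mk_mem_interedges_iff G).2 ⟨hu, hw, mem_edgeFinset.1 he⟩, rfl⟩

lemma card_interedges_insert_insert {Z W : Finset V} {x y v : V} (hxZ : x ∉ Z) (hyW : y ∉ W)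
    (hxy : ¬G.Adj x y) (hvW : v ∈ W) (hxv : G.Adj x v) :
    #(G.interedges (insert x Z) (insert y W)) =
      #{w ∈ W.erase v | G.Adj w x} + #{z ∈ Z | G.Adj z y} + #(G.interedges Z W) + 1 := by
  rw [card_interedges_insert_left G hxZ, card_interedges_insert_right G Z hyW, filter_insert,
    if_neg hxy]
  have hx : #{w ∈ W | G.Adj x w} = #{w ∈ W.erase v | G.Adj w x} + 1 := by
    simp_rw [G.adj_comm x]
    rw [filter_erase, card_erase_add_one (mem_filter.2 ⟨hvW, hxv.symm⟩)]
  omega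

end SimpleGraph

theorem stmt10_general {V : Type*} [DecidableEq V] [Fintype V] (T : SimpleGraph V)
    [DecidableRel T.Adj] (hT : T.IsTree) (k : ℕ)
    (X Y : {s : Finset V // s.card = k}) (x y v : V)
    (hx : X.1 \ Y.1 = {x}) (hy : Y.1 \ X.1 = {y})
    (hxv : T.Adj x v) (hvy : T.Adj v y) (hvXY : v ∉ X.1 ∪ Y.1)
    (Z W : Finset V) (hZ : Z = X.1 ∩ Y.1) (hW : W = (X.1 ∪ Y.1)ᶜ)
    (η a b c d : ℕ)
    (hη : η = (T.edgeFinset.filter fun e => ∃ z ∈ Z, ∃ w ∈ W, e = s(z, w)).card)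
    (ha : a = ((W.erase v).filter fun w => T.Adj w x).card)
    (hb : b = (Z.filter fun z => T.Adj z y).card)
    (hc : c = (Z.filter fun z => T.Adj z x).card)
    (hd : d = ((W.erase v).filter fun w => T.Adj w y).card) :
    Nat.card ((tokenGraph T k).neighborSet X) = a + b + η + 1 ∧
    Nat.card ((tokenGraph T k).neighborSet Y) = c + d + η + 1 := by
  subst hη ha hb hc hd
  have hxy : ¬T.Adj x y := (hT.isAcyclic.cliqueFree le_rfl).not_adj_of_adj_of_adj T hxv hvy
  have hxXY := mem_sdiff.1 (hx ▸ mem_singleton_self x)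
  have hyYX := mem_sdiff.1 (hy ▸ mem_singleton_self y)
  have hX : X.1 = insert x Z := hZ ▸ (insert_inter_of_sdiff_eq_singleton hx).symm
  have hXc : X.1ᶜ = insert y W := hW ▸ (insert_compl_union_of_sdiff_eq_singleton hy).symm
  have hY : Y.1 = insert y Z :=
    hZ ▸ inter_comm Y.1 X.1 ▸ (insert_inter_of_sdiff_eq_singleton hy).symm
  have hYc : Y.1ᶜ = insert x W :=
    hW ▸ union_comm Y.1 X.1 ▸ (insert_compl_union_of_sdiff_eq_singleton hx).symm
  have hvW : v ∈ W := hW ▸ mem_compl.2 hvXY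
  have hZW : Disjoint Z W := hZ ▸ hW ▸ disjoint_compl_right.mono_left inter_subset_union
  rw [← T.card_interedges_of_disjoint hZW, T.card_neighborSet_tokenGraph,
    T.card_neighborSet_tokenGraph, hXc, hX, hYc, hY,
    T.card_interedges_insert_insert (by simp [hZ, hxXY.2]) (by simp [hW, hyYX.1]) hxy hvW hxv,
    T.card_interedges_insert_insert (by simp [hZ, hyYX.2]) (by simp [hW, hxXY.1])
      (fun h => hxy h.symm) hvW hvy.symm]
  exact ⟨rfl, by ring⟩

theorem stmt10 {V : Type*} [DecidableEq V] [Fintype V] (T : SimpleGraph V)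
    [DecidableRel T.Adj] (hT : T.IsTree) (k : ℕ) (hk : 2 ≤ k)
    (hk' : k ≤ Fintype.card V - 2)
    (X Y : {s : Finset V // s.card = k}) (x y v : V)
    (hZcard : (X.1 ∩ Y.1).card = k - 1)
    (hx : X.1 \ Y.1 = {x}) (hy : Y.1 \ X.1 = {y})
    (hxv : T.Adj x v) (hvy : T.Adj v y) (hvXY : v ∉ X.1 ∪ Y.1)
    (Z W : Finset V) (hZ : Z = X.1 ∩ Y.1) (hW : W = (X.1 ∪ Y.1)ᶜ)
    (η a b c d : ℕ)
    (hη : η = (T.edgeFinset.filter fun e => ∃ z ∈ Z, ∃ w ∈ W, e = s(z, w)).card)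
    (ha : a = ((W.erase v).filter fun w => T.Adj w x).card)
    (hb : b = (Z.filter fun z => T.Adj z y).card)
    (hc : c = (Z.filter fun z => T.Adj z x).card)
    (hd : d = ((W.erase v).filter fun w => T.Adj w y).card) :
    Nat.card ((tokenGraph T k).neighborSet X) = a + b + η + 1 ∧
    Nat.card ((tokenGraph T k).neighborSet Y) = c + d + η + 1 :=
  stmt10_general T hT k X Y x y v hx hy hxv hvy hvXY Z W hZ hW η a b c d hη ha hb hc hd
end

section
/- If G is a connected graph of order n and 1 ≤ k ≤ n−1, then the k-token graph F_k(G) is connected. -/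
/-!
A token at `a` can be moved to any vertex `b` of `G` that carries no token, leaving the other
tokens in place: walk along a path from `a` to `b`; whenever the next vertex `c` is occupied, first
move the token at `c` on to `b` (recursively) and then step from `a` into the vacated `c`. Moving a
token from `X \ Y` to `Y \ X` shrinks `X \ Y`, so any two `k`-sets are joined in `F_k(G)`.
-/

open Finset

section TokenMoves

variable {V : Type*} [DecidableEq V]

lemma Finset.card_insert_erase_of_mem_of_notMem {s : Finset V} {a b : V} (ha : a ∈ s)
    (hb : b ∉ s) : #(insert b (s.erase a)) = #s := by
  rw [card_insert_of_notMem (fun h => hb (mem_of_mem_erase h)), card_erase_add_one ha]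

lemma Finset.symmDiff_insert_erase_of_mem_of_notMem {s : Finset V} {a b : V} (ha : a ∈ s)
    (hb : b ∉ s) : symmDiff s (insert b (s.erase a)) = {a, b} := by
  ext x
  simp only [mem_symmDiff, mem_insert, mem_erase, mem_singleton]
  grind

variable (G : SimpleGraph V) {k : ℕ}

lemma tokenGraph_adj_of_move {X Y : {s : Finset V // #s = k}} {a b : V} (ha : a ∈ X.1)
    (hb : b ∉ X.1) (hab : G.Adj a b) (hY : Y.1 = insert b (X.1.erase a)) :
    (tokenGraph G k).Adj X Y :=
  ⟨a, b, hab, by rw [hY, symmDiff_insert_erase_of_mem_of_notMem ha hb]⟩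

lemma tokenGraph_reachable_of_move {a b : V} (hab : G.Reachable a b)
    {X Y : {s : Finset V // #s = k}} (ha : a ∈ X.1) (hb : b ∉ X.1)
    (hY : Y.1 = insert b (X.1.erase a)) : (tokenGraph G k).Reachable X Y := by
  obtain ⟨w⟩ := hab
  induction w generalizing X Y with
  | nil => exact absurd ha hb
  | @cons a c b hac w ih =>
    by_cases hc : c ∈ X.1
    · let Z : {s : Finset V // #s = k} :=
        ⟨insert b (X.1.erase c), (card_insert_erase_of_mem_of_notMem hc hb).trans X.2⟩
      have haZ : a ∈ Z.1 := mem_insert_of_mem (mem_erase.mpr ⟨hac.ne, ha⟩)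
      have hcZ : c ∉ Z.1 := by grind
      refine (ih hc hb rfl).trans (tokenGraph_adj_of_move G haZ hcZ hac ?_).reachable
      rw [hY]
      ext x
      simp only [Z, mem_insert, mem_erase]
      grind
    · by_cases hcb : c = b
      · exact (tokenGraph_adj_of_move G ha hb (hcb ▸ hac) hY).reachable
      let Z : {s : Finset V // #s = k} :=
        ⟨insert c (X.1.erase a), (card_insert_erase_of_mem_of_notMem ha hc).trans X.2⟩
      have hbZ : b ∉ Z.1 := by grind
      refine (tokenGraph_adj_of_move G ha hc hac rfl).reachable.trans
        (ih (mem_insert_self _ _) hbZ ?_)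
      rw [hY, erase_insert (fun h => hc (mem_of_mem_erase h))]

theorem tokenGraph_preconnected (hG : G.Preconnected) (k : ℕ) :
    (tokenGraph G k).Preconnected := by
  suffices h : ∀ n (X Y : {s : Finset V // #s = k}), #(X.1 \ Y.1) = n →
      (tokenGraph G k).Reachable X Y from fun X Y => h _ X Y rfl
  intro n
  induction n with
  | zero =>
    intro X Y h
    have hXY : X = Y := Subtype.ext <| eq_of_subset_of_card_le
      (sdiff_eq_empty_iff_subset.mp (card_eq_zero.mp h)) (X.2.trans Y.2.symm).ge
    exact hXY ▸ .refl X
  | succ n ih =>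
    intro X Y h
    obtain ⟨a, ha⟩ : (X.1 \ Y.1).Nonempty := card_pos.mp (by omega)
    obtain ⟨b, hb⟩ : (Y.1 \ X.1).Nonempty :=
      card_pos.mp (by rw [← card_sdiff_comm (X.2.trans Y.2.symm)]; omega)
    rw [mem_sdiff] at ha hb
    let Z : {s : Finset V // #s = k} :=
      ⟨insert b (X.1.erase a), (card_insert_erase_of_mem_of_notMem ha.1 hb.2).trans X.2⟩
    have hZY : Z.1 \ Y.1 = (X.1 \ Y.1).erase a := by
      ext x
      simp only [Z, mem_sdiff, mem_insert, mem_erase]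
      grind
    refine (tokenGraph_reachable_of_move G (hG a b) ha.1 hb.2 rfl).trans (ih Z Y ?_)
    rw [hZY, card_erase_of_mem (mem_sdiff.mpr ha), h, Nat.add_sub_cancel]

end TokenMoves

theorem stmt17_general {V : Type*} [DecidableEq V] [Fintype V] (G : SimpleGraph V)
    (hG : G.Connected) (k : ℕ) (hk' : k ≤ Fintype.card V - 1) :
    (tokenGraph G k).Connected := by
  obtain ⟨s, -, hs⟩ := exists_subset_card_eq (s := (univ : Finset V)) (hk'.trans (Nat.sub_le _ _))
  have : Nonempty {s : Finset V // #s = k} := ⟨⟨s, hs⟩⟩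
  exact ⟨tokenGraph_preconnected G hG.preconnected k⟩

theorem stmt17 {V : Type*} [DecidableEq V] [Fintype V] (G : SimpleGraph V)
    (hG : G.Connected) (k : ℕ) (hk : 1 ≤ k) (hk' : k ≤ Fintype.card V - 1) :
    (tokenGraph G k).Connected :=
  stmt17_general G hG k hk'
end
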